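/- Construction B: for all integers N ≥ 2, T ≥ 1, and K = T·(N−1), there exists an (N,K) PIR scheme (with binary messages, L = 1 bit) whose storage cost α and download cost β satisfy α ≤ T and β ≤ (2^T − 1)/2^T. -/

import Mathlib

/- Shannon entropy framework for finitely-valued random variables on a finite
probability space, and the definition of an (N,K) private information retrieval
(PIR) scheme. -/

open scoped Classical
open Finset

/-- `prob p X a` is the probability that the random variable `X` takes the value `a`,
where `p` is the probability mass function on the finite sample space `Ω`. -/
noncomputable def prob {Ω α : Type} [Fintype Ω] (p : Ω → ℝ) (X : Ω → α) (a : α) : ℝ :=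
  ∑ ω : Ω, if X ω = a then p ω else 0

/-- Shannon entropy (natural base) of a random variable `X` on a finite sample space. -/
noncomputable def ent {Ω α : Type} [Fintype Ω] (p : Ω → ℝ) (X : Ω → α) : ℝ :=
  ∑ a ∈ Finset.univ.image X, Real.negMulLog (prob p X a)

/-- Conditional Shannon entropy `H(X | Y) = H(X, Y) - H(Y)`. -/
noncomputable def condEnt {Ω α β : Type} [Fintype Ω] (p : Ω → ℝ) (X : Ω → α) (Y : Ω → β) : ℝ :=
  ent p (fun ω => (X ω, Y ω)) - ent p Y

/-- An `(N, K)` private information retrieval scheme: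
`K` mutually independent messages `W` with entropy `L` each, stored contents `S` at `N`
servers (deterministic functions of the messages), a random key `F` independent of the
messages, queries `Q` (deterministic functions of `F`), answers `A` (deterministic
functions of the query and the stored content, with an answer function not depending on
the desired index), correctness and privacy. Messages/servers are indexed `0, …, K-1`
and `0, …, N-1` (paper index `i` corresponds to index `i - 1` here). -/
structure PIRScheme (N K : ℕ) where
  Ω : Type
  [finΩ : Fintype Ω]
  Msg : Type
  Sto : Type
  Qry : Type
  Ans : Type
  Key : Type
  p : Ω → ℝ
  p_nonneg : ∀ ω, 0 ≤ p ω
  p_sum : ∑ ω : Ω, p ω = 1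
  L : ℝ
  L_pos : 0 < L
  W : Fin K → Ω → Msg
  S : Fin N → Ω → Sto
  F : Ω → Key
  Q : Fin K → Fin N → Ω → Qry
  A : Fin K → Fin N → Ω → Ans
  W_indep : ∀ w : Fin K → Msg,
    prob p (fun ω => (fun k => W k ω)) w = ∏ k : Fin K, prob p (W k) (w k)
  W_ent : ∀ k, ent p (W k) = L
  F_indep : ∀ (f : Key) (w : Fin K → Msg),
    prob p (fun ω => (F ω, fun k => W k ω)) (f, w)
      = prob p F f * prob p (fun ω => (fun k => W k ω)) w
  S_det : ∀ n : Fin N, ∃ g : (Fin K → Msg) → Sto, ∀ ω, S n ω = g (fun k => W k ω)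
  Q_det : ∀ (k : Fin K) (n : Fin N), ∃ g : Key → Qry, ∀ ω, Q k n ω = g (F ω)
  A_det : ∀ n : Fin N, ∃ φ : Qry → Sto → Ans, ∀ (k : Fin K) (ω : Ω), A k n ω = φ (Q k n ω) (S n ω)
  correct : ∀ k : Fin K, ∃ g : (Fin N → Ans) → (Fin N → Qry) → Msg,
    ∀ ω, W k ω = g (fun n => A k n ω) (fun n => Q k n ω)
  privacy : ∀ (n : Fin N) (k k' : Fin K) (q : Qry),
    prob p (Q k n) q = prob p (Q k' n) q

attribute [instance] PIRScheme.finΩ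

/-- The set of server (or message) indices `{i : i < m}`, i.e. paper indices `1, …, m`. -/
def finLt (N m : ℕ) : Finset (Fin N) := Finset.univ.filter (fun i => i.val < m)

/-- The set of server (or message) indices `{i : m ≤ i}`, i.e. paper indices `m+1, …, N`. -/
def finGe (N m : ℕ) : Finset (Fin N) := Finset.univ.filter (fun i => m ≤ i.val)

namespace PIRScheme

variable {N K : ℕ}

/-- Informational normalized storage cost `α = (1/(N L)) ∑ₙ H(Sₙ)`. -/
noncomputable def alpha (s : PIRScheme N K) : ℝ :=
  (1 / (N * s.L)) * ∑ n : Fin N, ent s.p (s.S n)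

/-- Informational normalized download cost for desired message `k`:
`(1/(N L)) ∑ₙ H(Aₙ^[k] | Q₁^[k], …, Q_N^[k])`.  The download cost `β` of the scheme is
`betaAt` at the first message. -/
noncomputable def betaAt (s : PIRScheme N K) (k : Fin K) : ℝ :=
  (1 / (N * s.L)) *
    ∑ n : Fin N, condEnt s.p (s.A k n) (fun ω => (fun n' : Fin N => s.Q k n' ω))

/-- The joint random variable `S_B = (Sₙ : n ∈ B)`. -/
noncomputable def jointS (s : PIRScheme N K) (B : Finset (Fin N)) : s.Ω → (B → s.Sto) :=
  fun ω i => s.S i.1 ω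

/-- The joint random variable `A_B^[k] = (Aₙ^[k] : n ∈ B)`. -/
noncomputable def jointA (s : PIRScheme N K) (k : Fin K) (B : Finset (Fin N)) :
    s.Ω → (B → s.Ans) :=
  fun ω i => s.A k i.1 ω

/-- The joint random variable `W_C = (Wₖ : k ∈ C)`. -/
noncomputable def jointW (s : PIRScheme N K) (C : Finset (Fin K)) : s.Ω → (C → s.Msg) :=
  fun ω i => s.W i.1 ω

/-- A scheme is symmetric if
`H(S_A, A_B^[k] | F, W_C) = H(S_{π(A)}, A_{π(B)}^[π'(k)] | F, W_{π'(C)})` for all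
permutations `π` of the servers and `π'` of the messages. -/
def Symmetric (s : PIRScheme N K) : Prop :=
  ∀ (A B : Finset (Fin N)) (C : Finset (Fin K)) (k : Fin K)
    (π : Equiv.Perm (Fin N)) (π' : Equiv.Perm (Fin K)),
    condEnt s.p (fun ω => (s.jointS A ω, s.jointA k B ω)) (fun ω => (s.F ω, s.jointW C ω))
      = condEnt s.p (fun ω => (s.jointS (A.image ⇑π) ω, s.jointA (π' k) (B.image ⇑π) ω))
          (fun ω => (s.F ω, s.jointW (C.image ⇑π') ω))

end PIRScheme

/-
The sample space is the group of pairs `(w, v)` of message bits and key, with the uniform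
distribution, and the messages, the key and the stored contents are surjective additive maps
of it. Such a map pushes the uniform distribution forward to the uniform one: this gives the
independence of messages and key, privacy (every query is the key translated by a constant)
and `H(Sₙ) = T log 2`.
Every message bit is stored twice, once in its block and once in the parity, so the sum of all
answers `∑ₙ (v + δₙ) ⬝ᵥ Sₙ` loses `v` and leaves the single bit selected by the flip `δ`. Given
the queries, server `n` answers `q ⬝ᵥ Sₙ` for a known `q`, a uniform bit unless `q = 0`, which
happens with probability `2⁻ᵀ`; hence `H(Aₙ | Q) = (1 - 2⁻ᵀ) log 2`.
-/

noncomputable def uniformMass (Ω : Type) [Fintype Ω] : Ω → ℝ := fun _ => (Fintype.card Ω : ℝ)⁻¹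

section Entropy

variable {Ω α β γ : Type} [Fintype Ω]

lemma sum_prob [Fintype α] (p : Ω → ℝ) (X : Ω → α) : ∑ a, prob p X a = ∑ ω, p ω := by
  simp only [prob]
  rw [Finset.sum_comm]
  simp

lemma prob_add_const [AddGroup α] (p : Ω → ℝ) (X : Ω → α) (c b : α) :
    prob p (fun ω => X ω + c) b = prob p X (b - c) := by
  simp only [prob, eq_sub_iff_add_eq]

lemma ent_eq_sum [Fintype α] (p : Ω → ℝ) (X : Ω → α) :
    ent p X = ∑ a, Real.negMulLog (prob p X a) := by
  refine Finset.sum_subset (Finset.subset_univ _) fun a _ ha => ?_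
  have : prob p X a = 0 :=
    Finset.sum_eq_zero fun ω _ => if_neg fun h => ha (Finset.mem_image.mpr ⟨ω, by simp, h⟩)
  rw [this, Real.negMulLog_zero]

lemma ent_comp_of_injective (p : Ω → ℝ) (X : Ω → α) {g : α → β} (hg : Function.Injective g) :
    ent p (fun ω => g (X ω)) = ent p X := by
  have hprob : ∀ a, prob p (fun ω => g (X ω)) (g a) = prob p X a := fun a =>
    Finset.sum_congr rfl fun ω _ => by simp only [hg.eq_iff]
  have himage : univ.image (fun ω => g (X ω)) = (univ.image X).image g := by
    rw [Finset.image_image]; rfl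
  rw [ent, ent, himage, Finset.sum_image fun a _ b _ h => hg h]
  simp only [hprob]

lemma condEnt_comp_of_injective (p : Ω → ℝ) (X : Ω → α) (Y : Ω → β) {g : β → γ}
    (hg : Function.Injective g) :
    condEnt p X (fun ω => g (Y ω)) = condEnt p X Y := by
  rw [condEnt, condEnt, ent_comp_of_injective p Y hg]
  congr 1
  exact ent_comp_of_injective p (fun ω => (X ω, Y ω)) (Function.injective_id.prodMap hg)

lemma ent_const {p : Ω → ℝ} (hp : ∑ ω, p ω = 1) (b : α) : ent p (fun _ => b) = 0 :=
  Finset.sum_eq_zero fun a ha => by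
    obtain ⟨_, _, rfl⟩ := Finset.mem_image.mp ha
    simp [prob, hp]

end Entropy

section Uniform

variable {Ω α β γ : Type} [Fintype Ω]

lemma sum_uniformMass [Nonempty Ω] : ∑ ω, uniformMass Ω ω = 1 := by
  simp [uniformMass]

lemma prob_uniformMass (X : Ω → α) (a : α) :
    prob (uniformMass Ω) X a = #{ω | X ω = a} / Fintype.card Ω := by
  simp [prob, uniformMass, Finset.sum_ite, div_eq_mul_inv]

lemma ent_uniformMass_of_prob_eq [Fintype α] (X : Ω → α)
    (h : ∀ a, prob (uniformMass Ω) X a = (Fintype.card α : ℝ)⁻¹) :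
    ent (uniformMass Ω) X = Real.log (Fintype.card α) := by
  rcases isEmpty_or_nonempty α with _ | _
  · simp [ent_eq_sum]
  simp only [ent_eq_sum, h, Finset.sum_const, Finset.card_univ, nsmul_eq_mul, Real.negMulLog,
    Real.log_inv]
  field_simp

lemma prob_uniformMass_of_surjective {G H Φ : Type} [AddGroup G] [Fintype G] [AddGroup H]
    [Fintype H] [FunLike Φ G H] [AddMonoidHomClass Φ G H] (f : Φ) (hf : Function.Surjective f)
    (h : H) :
    prob (uniformMass G) f h = (Fintype.card H : ℝ)⁻¹ := by
  have hfiber : ∀ h', #{g | f g = h'} = #{g | f g = h} := fun h' =>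
    AddMonoidHom.card_fiber_eq_of_mem_range f (hf h') (hf h)
  have hcard : Fintype.card G = Fintype.card H * #{g | f g = h} := by
    rw [← Finset.card_univ, Finset.card_eq_sum_card_fiberwise (fun g _ => Finset.mem_univ (f g))]
    simp [hfiber]
  have hpos : 0 < #{g | f g = h} := by
    obtain ⟨g, rfl⟩ := hf h
    exact Finset.card_pos.mpr ⟨g, by simp⟩
  rw [prob_uniformMass, hcard]
  push_cast
  field_simp

lemma ent_uniformMass_of_surjective {G H Φ : Type} [AddGroup G] [Fintype G] [AddGroup H]
    [Fintype H] [FunLike Φ G H] [AddMonoidHomClass Φ G H] (f : Φ)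
    (hf : Function.Surjective f) :
    ent (uniformMass G) f = Real.log (Fintype.card H) :=
  ent_uniformMass_of_prob_eq _ (prob_uniformMass_of_surjective f hf)

variable [Fintype α] [Fintype β]

lemma prob_uniformMass_prod (g : α → β → γ) (c : γ) (b : β) :
    prob (uniformMass (α × β)) (fun ω => (g ω.1 ω.2, ω.2)) (c, b)
      = (Fintype.card β : ℝ)⁻¹ * prob (uniformMass α) (fun a => g a b) c := by
  simp only [prob, uniformMass, Fintype.sum_prod_type, Prod.mk.injEq, Fintype.card_prod, ite_and]
  rw [Finset.sum_comm, Finset.sum_eq_single b]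
  · simp [Finset.mul_sum]
  · intro b' _ hb'
    simp [hb']
  · simp

lemma condEnt_uniformMass_prod [Fintype γ] [Nonempty α] (g : α → β → γ) :
    condEnt (uniformMass (α × β)) (fun ω => g ω.1 ω.2) (fun ω => ω.2)
      = (Fintype.card β : ℝ)⁻¹ * ∑ b, ent (uniformMass α) (fun a => g a b) := by
  have hsnd : ent (uniformMass (α × β)) (fun ω => ω.2) = Real.log (Fintype.card β) := by
    refine ent_uniformMass_of_prob_eq _ fun b => ?_
    simp only [prob, uniformMass, Fintype.card_prod, Nat.cast_mul, mul_inv_rev,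
      Fintype.sum_prod_type, sum_ite_eq', mem_univ, ↓reduceIte, sum_const, card_univ, nsmul_eq_mul]
    field_simp
  rw [condEnt, hsnd, ent_eq_sum, Fintype.sum_prod_type_right]
  simp only [prob_uniformMass_prod, Real.negMulLog_mul, Finset.sum_add_distrib, ← Finset.sum_mul,
    ← Finset.mul_sum, sum_prob, sum_uniformMass, ent_eq_sum]
  rcases isEmpty_or_nonempty β with _ | _
  · simp
  simp [Real.negMulLog, Real.log_inv]

end Uniform

lemma dotProduct_left_surjective {ι F : Type} [Fintype ι] [DecidableEq ι] [Field F]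
    {q : ι → F} (hq : q ≠ 0) : Function.Surjective (fun s => q ⬝ᵥ s) := by
  obtain ⟨i, hi⟩ := Function.ne_iff.mp hq
  exact fun a => ⟨Pi.single i (a / q i), by simp [dotProduct_single, mul_div_cancel₀ _ hi]⟩

lemma ent_dotProduct_comp {G ι F Φ : Type} [AddGroup G] [Fintype G] [Fintype ι] [DecidableEq ι]
    [Field F] [Fintype F] [DecidableEq F] [FunLike Φ G (ι → F)] [AddMonoidHomClass Φ G (ι → F)]
    (f : Φ) (hf : Function.Surjective f) (q : ι → F) :
    ent (uniformMass G) (fun g => q ⬝ᵥ f g) = if q = 0 then 0 else Real.log (Fintype.card F) := by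
  split_ifs with hq
  · simp only [hq, zero_dotProduct]
    exact ent_const sum_uniformMass 0
  · let dot : (ι → F) →+ F := AddMonoidHom.mk' (fun s => q ⬝ᵥ s) (dotProduct_add q)
    exact ent_uniformMass_of_surjective (dot.comp (f : G →+ (ι → F)))
      ((dotProduct_left_surjective hq).comp hf)

namespace ConstructionB

variable (M T : ℕ)

abbrev Sample : Type := (Fin (T * M) → ZMod 2) × (Fin T → ZMod 2)

-- `(j, i) ↦ T * j + i`: server `j` stores the messages `T * j, …, T * j + T - 1`.
def msgIndex : Fin M × Fin T ≃ Fin (T * M) :=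
  finProdFinEquiv.trans (finCongr (Nat.mul_comm M T))

def block (j : Fin M) : (Fin (T * M) → ZMod 2) →ₗ[ZMod 2] (Fin T → ZMod 2) :=
  LinearMap.funLeft (ZMod 2) (ZMod 2) fun i => msgIndex M T (j, i)

def store (n : Fin (M + 1)) : (Fin (T * M) → ZMod 2) →ₗ[ZMod 2] (Fin T → ZMod 2) :=
  Fin.lastCases (∑ j, block M T j) (block M T) n

def queryShift (k : Fin (T * M)) : Fin (M + 1) → Fin T → ZMod 2 :=
  Pi.single ((msgIndex M T).symm k).1.castSucc (Pi.single ((msgIndex M T).symm k).2 1)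

variable {M T}

@[simp]
lemma store_castSucc (j : Fin M) : store M T j.castSucc = block M T j :=
  Fin.lastCases_castSucc _

@[simp]
lemma store_last : store M T (Fin.last M) = ∑ j, block M T j :=
  Fin.lastCases_last

lemma sum_store (w : Fin (T * M) → ZMod 2) : ∑ n, store M T n w = 0 := by
  rw [Fin.sum_univ_castSucc]
  ext i
  simp only [store_castSucc, store_last, LinearMap.sum_apply, Pi.add_apply, Finset.sum_apply]
  exact CharTwo.add_self_eq_zero _

lemma store_surjective [NeZero M] (n : Fin (M + 1)) : Function.Surjective (store M T n) := by
  have hblock : ∀ (j₀ : Fin M) (u : Fin T → ZMod 2), ∃ w, ∀ j,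
      block M T j w = (Pi.single j₀ u : Fin M → Fin T → ZMod 2) j := fun j₀ u =>
    ⟨fun k => (Pi.single j₀ u : Fin M → Fin T → ZMod 2) ((msgIndex M T).symm k).1
      ((msgIndex M T).symm k).2,
      fun j => by ext i; simp [block]⟩
  intro u
  induction n using Fin.lastCases with
  | last =>
    obtain ⟨w, hw⟩ := hblock 0 u
    exact ⟨w, by simp [LinearMap.sum_apply, hw]⟩
  | cast j =>
    obtain ⟨w, hw⟩ := hblock j u
    exact ⟨w, by simp [hw]⟩

lemma sum_answers (k : Fin (T * M)) (w : Fin (T * M) → ZMod 2) (v : Fin T → ZMod 2) :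
    ∑ n, (v + queryShift M T k n) ⬝ᵥ store M T n w = w k := by
  simp only [add_dotProduct, Finset.sum_add_distrib, ← dotProduct_sum, sum_store, dotProduct_zero,
    zero_add, queryShift]
  rw [Finset.sum_eq_single ((msgIndex M T).symm k).1.castSucc]
  · simp [single_dotProduct, block]
  · intro n _ hn
    simp [Pi.single_eq_of_ne hn]
  · simp

lemma prob_messages (w : Fin (T * M) → ZMod 2) :
    prob (uniformMass (Sample M T)) (fun ω k => ω.1 k) w = ((2 : ℝ) ^ (T * M))⁻¹ := by
  refine (prob_uniformMass_of_surjective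
    (AddMonoidHom.fst (Fin (T * M) → ZMod 2) (Fin T → ZMod 2)) Prod.fst_surjective w).trans ?_
  simp

lemma prob_message (k : Fin (T * M)) (a : ZMod 2) :
    prob (uniformMass (Sample M T)) (fun ω => ω.1 k) a = 2⁻¹ := by
  refine (prob_uniformMass_of_surjective ((Pi.evalAddMonoidHom (fun _ => ZMod 2) k).comp
    (AddMonoidHom.fst (Fin (T * M) → ZMod 2) (Fin T → ZMod 2)))
    ((Function.surjective_eval k).comp Prod.fst_surjective) a).trans ?_
  simp

lemma prob_key (v : Fin T → ZMod 2) :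
    prob (uniformMass (Sample M T)) (fun ω => ω.2) v = ((2 : ℝ) ^ T)⁻¹ := by
  refine (prob_uniformMass_of_surjective
    (AddMonoidHom.snd (Fin (T * M) → ZMod 2) (Fin T → ZMod 2)) Prod.snd_surjective v).trans ?_
  simp

lemma prob_key_messages (v : Fin T → ZMod 2) (w : Fin (T * M) → ZMod 2) :
    prob (uniformMass (Sample M T)) (fun ω => (ω.2, fun k => ω.1 k)) (v, w)
      = ((2 : ℝ) ^ T)⁻¹ * ((2 : ℝ) ^ (T * M))⁻¹ := by
  let swap : Sample M T ≃+ (Fin T → ZMod 2) × (Fin (T * M) → ZMod 2) := AddEquiv.prodComm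
  refine (prob_uniformMass_of_surjective swap.toAddMonoidHom swap.surjective (v, w)).trans ?_
  simp [mul_comm]

variable (M T)

noncomputable def scheme : PIRScheme (M + 1) (T * M) where
  Ω := Sample M T
  Msg := ZMod 2
  Sto := Fin T → ZMod 2
  Qry := Fin T → ZMod 2
  Ans := ZMod 2
  Key := Fin T → ZMod 2
  p := uniformMass _
  p_nonneg _ := inv_nonneg.mpr (Nat.cast_nonneg _)
  p_sum := sum_uniformMass
  L := Real.log 2
  L_pos := Real.log_pos one_lt_two
  W k ω := ω.1 k
  S n ω := store M T n ω.1
  F ω := ω.2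
  Q k n ω := ω.2 + queryShift M T k n
  A k n ω := (ω.2 + queryShift M T k n) ⬝ᵥ store M T n ω.1
  W_indep w := by simp [prob_messages, prob_message]
  W_ent k := by
    rw [ent_uniformMass_of_prob_eq _ fun a => by rw [prob_message, ZMod.card]; norm_num, ZMod.card]
    norm_num
  F_indep f w := by simp only [prob_key_messages, prob_key, prob_messages]
  S_det n := ⟨store M T n, fun _ => rfl⟩
  Q_det k n := ⟨fun f => f + queryShift M T k n, fun _ => rfl⟩
  A_det n := ⟨fun q s => q ⬝ᵥ s, fun _ _ => rfl⟩
  correct k := ⟨fun a _ => ∑ n, a n, fun ω => (sum_answers k ω.1 ω.2).symm⟩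
  privacy n k k' q := by simp only [prob_add_const, prob_key]

variable {M T}

lemma ent_store [NeZero M] (n : Fin (M + 1)) :
    ent (uniformMass (Sample M T)) (fun ω => store M T n ω.1) = T * Real.log 2 := by
  refine (ent_uniformMass_of_surjective
    ((store M T n).toAddMonoidHom.comp (AddMonoidHom.fst _ (Fin T → ZMod 2)))
    ((store_surjective n).comp Prod.fst_surjective)).trans ?_
  simp

lemma condEnt_answer_queries [NeZero M] (k : Fin (T * M)) (n : Fin (M + 1)) :
    condEnt (uniformMass (Sample M T)) (fun ω => (ω.2 + queryShift M T k n) ⬝ᵥ store M T n ω.1)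
        (fun ω n' => ω.2 + queryShift M T k n')
      = ((2 : ℝ) ^ T - 1) / 2 ^ T * Real.log 2 := by
  have hinj : Function.Injective fun (v : Fin T → ZMod 2) n' => v + queryShift M T k n' :=
    fun v v' h => add_right_cancel (congrFun h 0)
  refine ((condEnt_comp_of_injective _ _ (fun ω : Sample M T => ω.2) hinj).trans
    (condEnt_uniformMass_prod fun w v => (v + queryShift M T k n) ⬝ᵥ store M T n w)).trans ?_
  simp only [fun v => ent_dotProduct_comp (store M T n) (store_surjective n)
    (v + queryShift M T k n)]
  have hshift : ∀ c L : ℝ, ∑ v : Fin T → ZMod 2, (if v + queryShift M T k n = 0 then c else L)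
      = ∑ q : Fin T → ZMod 2, (if q = 0 then c else L) := fun c L =>
    Equiv.sum_comp (Equiv.addRight (queryShift M T k n)) fun q => if q = 0 then c else L
  rw [hshift]
  simp [Finset.sum_ite, Finset.filter_ne', div_eq_inv_mul, mul_assoc]

lemma L_scheme : (scheme M T).L = Real.log 2 := rfl

lemma alpha_scheme [NeZero M] : (scheme M T).alpha = T := by
  have hlog : Real.log 2 ≠ 0 := (Real.log_pos one_lt_two).ne'
  have hent : ∀ n, ent (scheme M T).p ((scheme M T).S n) = T * Real.log 2 := ent_store
  simp only [PIRScheme.alpha, hent, L_scheme, sum_const, card_univ, Fintype.card_fin, nsmul_eq_mul]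
  field_simp

lemma betaAt_scheme [NeZero M] (k : Fin (T * M)) :
    (scheme M T).betaAt k = ((2 : ℝ) ^ T - 1) / 2 ^ T := by
  have hlog : Real.log 2 ≠ 0 := (Real.log_pos one_lt_two).ne'
  have hcond : ∀ n, condEnt (scheme M T).p ((scheme M T).A k n)
      (fun ω n' => (scheme M T).Q k n' ω) = ((2 : ℝ) ^ T - 1) / 2 ^ T * Real.log 2 :=
    condEnt_answer_queries k
  simp only [PIRScheme.betaAt, hcond, L_scheme, sum_const, card_univ, Fintype.card_fin,
    nsmul_eq_mul]
  field_simp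

end ConstructionB

/-- Construction B: for all `N ≥ 2`, `T ≥ 1` and `K = T·(N-1)`, there is an `(N,K)` PIR
scheme with binary messages (`L = log 2`, i.e. one bit in natural-log units) whose costs
satisfy `α ≤ T` and `β ≤ (2^T - 1)/2^T`. -/
theorem stmt18 (N T : ℕ) (hN : 2 ≤ N) (hT : 1 ≤ T) :
    ∃ s : PIRScheme N (T * (N - 1)), s.L = Real.log 2 ∧
      s.alpha ≤ (T : ℝ) ∧
      s.betaAt ⟨0, Nat.mul_pos hT (by omega)⟩ ≤ ((2 : ℝ) ^ T - 1) / 2 ^ T := by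
  obtain ⟨M, rfl⟩ : ∃ M, N = M + 1 := ⟨N - 1, by omega⟩
  have : NeZero M := ⟨by omega⟩
  exact ⟨ConstructionB.scheme M T, ConstructionB.L_scheme, ConstructionB.alpha_scheme.le,
    (ConstructionB.betaAt_scheme _).le⟩
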